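/- Let x, y be words of equal length with x·y ≠ y·x. Suppose p·(x·y)·s = concat v for some list v over {x,y} with p a strict prefix of the first entry of v and s a strict suffix of the last entry of v (a nontrivial {x,y}-interpretation of x·y). Then v = [x,y,x] or v = [y,x,y], and in either case x·y is imprimitive. -/

import Mathlib

/-- `wpow u n` is the `n`-fold concatenation of the word `u` with itself. -/
def wpow {α : Type*} (u : List α) (n : ℕ) : List α := (List.replicate n u).flatten

/-- A word is imprimitive if it is empty or a proper power. -/
def Imprim {α : Type*} (w : List α) : Prop := ∃ (t : List α) (k : ℕ), 2 ≤ k ∧ w = wpow t k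

/-!
All entries of `v` have length `n = |x|`, and `|p|, |s| < n` with `(|p|, |s|) ≠ (0, 0)` force
`v = [a, b, c]` and `|p| + |s| = n`. With `m = |p|`, the words `x` and `y` are then the length-`n`
windows at offset `m` of `a ++ b` and of `b ++ c`. Unless `abc` is `xyx` or `yxy`, these equations
make `x` and `y` prefixes (or suffixes) of periodic words with one and the same nonempty period,
so `x = y`, contradicting `xy ≠ yx`. In the two remaining cases `xy` is a nontrivial rotation of
itself, hence a proper power.
-/

open List

namespace List

variable {α : Type*}

theorem IsPrefix.length_lt_of_ne {l₁ l₂ : List α} (h : l₁ <+: l₂) (hne : l₁ ≠ l₂) :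
    l₁.length < l₂.length :=
  lt_of_le_of_ne h.length_le (mt h.eq_of_length hne)

theorem IsSuffix.length_lt_of_ne {l₁ l₂ : List α} (h : l₁ <:+ l₂) (hne : l₁ ≠ l₂) :
    l₁.length < l₂.length :=
  lt_of_le_of_ne h.length_le (mt h.eq_of_length hne)

theorem headI_mem [Inhabited α] {l : List α} (h : l ≠ []) : l.headI ∈ l := by
  cases l <;> simp_all

theorem getLastD_mem {l : List α} (d : α) (h : l ≠ []) : l.getLastD d ∈ l := by
  obtain ⟨a, t, rfl⟩ := exists_cons_of_ne_nil h
  rw [getLastD_cons]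
  exact getLastD_mem_cons

theorem length_flatten_of_forall_length_eq {v : List (List α)} {n : ℕ}
    (h : ∀ a ∈ v, a.length = n) : v.flatten.length = v.length * n := by
  rw [length_flatten, map_congr_left h, map_const', sum_replicate, smul_eq_mul]

theorem prefix_append_of_eq_append_take {u t w : List α} {m : ℕ} (h : u = t ++ w.take m) :
    u <+: t ++ w :=
  h ▸ (prefix_append_right_inj t).mpr (take_prefix m w)

theorem suffix_append_of_eq_drop_append {u t w : List α} {m : ℕ} (h : u = w.drop m ++ t) :
    u <:+ w ++ t :=
  h ▸ ⟨w.take m, by rw [← append_assoc, take_append_drop]⟩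

theorem eq_of_prefix_append_self {t u w : List α} (ht : t ≠ []) (hu : u <+: t ++ u)
    (hw : w <+: t ++ w) (hlen : u.length = w.length) : u = w := by
  induction' hk : u.length using Nat.strong_induction_on with k ih generalizing u w
  rcases le_or_gt u.length t.length with hle | hlt
  · have hut : u <+: t := prefix_of_prefix_length_le hu (t.prefix_append u) hle
    have hwt : w <+: t := prefix_of_prefix_length_le hw (t.prefix_append w) (hlen ▸ hle)
    exact (prefix_of_prefix_length_le hut hwt hlen.le).eq_of_length hlen
  · obtain ⟨u', rfl⟩ : t <+: u := prefix_of_prefix_length_le (t.prefix_append u) hu hlt.le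
    obtain ⟨w', rfl⟩ : t <+: w :=
      prefix_of_prefix_length_le (t.prefix_append w) hw (hlen ▸ hlt).le
    have ht' : 0 < t.length := length_pos_iff.mpr ht
    simp only [length_append] at hk hlen
    rw [ih u'.length (by omega) ((prefix_append_right_inj t).mp hu)
      ((prefix_append_right_inj t).mp hw) (by omega) rfl]

theorem eq_of_prefix_append_of_prefix_append {t u w : List α} (ht : t ≠ [])
    (hu : u <+: t ++ w) (hw : w <+: t ++ u) (hlen : u.length = w.length) : u = w := by
  have hu' : u <+: t ++ t ++ u := hu.trans (by simpa using hw)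
  have hw' : w <+: t ++ t ++ w := hw.trans (by simpa using hu)
  exact eq_of_prefix_append_self (by simp [ht]) hu' hw' hlen

theorem eq_of_suffix_append_self {t u w : List α} (ht : t ≠ []) (hu : u <:+ u ++ t)
    (hw : w <:+ w ++ t) (hlen : u.length = w.length) : u = w := by
  rw [← reverse_prefix, reverse_append] at hu hw
  exact reverse_injective <|
    eq_of_prefix_append_self (by simpa using ht) hu hw (by simpa using hlen)

theorem eq_of_suffix_append_of_suffix_append {t u w : List α} (ht : t ≠ [])
    (hu : u <:+ w ++ t) (hw : w <:+ u ++ t) (hlen : u.length = w.length) : u = w := by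
  rw [← reverse_prefix, reverse_append] at hu hw
  exact reverse_injective <|
    eq_of_prefix_append_of_prefix_append (by simpa using ht) hu hw (by simpa using hlen)

theorem eq_drop_append_take_of_append_eq {p x y s a b c : List α} {n : ℕ}
    (heq : p ++ x ++ y ++ s = a ++ b ++ c) (hx : x.length = n) (hy : y.length = n)
    (ha : a.length = n) (hb : b.length = n) (hp : p.length ≤ n) :
    x = a.drop p.length ++ b.take p.length ∧ y = b.drop p.length ++ c.take p.length := by
  have hxw : x = ((a ++ b ++ c).drop p.length).take n := by
    rw [← heq]; simp [← hx]
  have hyw : y = ((a ++ b ++ c).drop (p.length + n)).take n := by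
    rw [← heq, ← hx]; simp [hx, ← hy]
  have hm : n - (n - p.length) = p.length := by omega
  constructor
  · rw [hxw]; simp [drop_append, take_append, ha, hb, hm, Nat.sub_eq_zero_of_le hp]
  · rw [hyw]
    simp [drop_eq_nil_of_le, take_of_length_le, drop_append, take_append, ha, hb, hm,
      Nat.sub_eq_zero_of_le hp]

end List

theorem Nat.eq_three_of_mul_eq_add {k n p s : ℕ} (h : k * n = p + 2 * n + s) (hp : p < n)
    (hs : s < n) (hps : p + s ≠ 0) : k = 3 := by
  rcases Nat.lt_or_ge k 3 with hk | hk
  · interval_cases k <;> omega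
  · rcases Nat.lt_or_ge k 4 with hk' | hk'
    · omega
    · nlinarith

section Imprim

variable {α : Type*}

theorem wpow_add (u : List α) (i j : ℕ) : wpow u (i + j) = wpow u i ++ wpow u j := by
  rw [wpow, replicate_add, flatten_append]; rfl

theorem exists_eq_wpow_of_append_comm {u w : List α} (h : u ++ w = w ++ u) :
    ∃ z i j, u = wpow z i ∧ w = wpow z j := by
  induction' hk : u.length + w.length using Nat.strong_induction_on with k ih generalizing u w
  wlog hle : u.length ≤ w.length generalizing u w
  · obtain ⟨z, i, j, hu, hw⟩ := this h.symm (by omega) (by omega)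
    exact ⟨z, j, i, hw, hu⟩
  rcases eq_or_ne u [] with rfl | hu
  · exact ⟨w, 0, 1, rfl, by simp [wpow]⟩
  obtain ⟨w', rfl⟩ : u <+: w :=
    prefix_of_prefix_length_le (h ▸ u.prefix_append w) (w.prefix_append u) hle
  have h' : u ++ w' = w' ++ u := by simpa using h
  have hu' : 0 < u.length := length_pos_iff.mpr hu
  obtain ⟨z, i, j, rfl, rfl⟩ := ih _ (by simp only [length_append] at hk; omega) h' rfl
  exact ⟨z, i, i + j, rfl, (wpow_add z i j).symm⟩

theorem imprim_append_of_append_comm {u w : List α} (hu : u ≠ []) (hw : w ≠ [])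
    (h : u ++ w = w ++ u) : Imprim (u ++ w) := by
  obtain ⟨z, i, j, rfl, rfl⟩ := exists_eq_wpow_of_append_comm h
  have hi : i ≠ 0 := by rintro rfl; exact hu rfl
  have hj : j ≠ 0 := by rintro rfl; exact hw rfl
  exact ⟨z, i + j, by omega, (wpow_add z i j).symm⟩

theorem imprim_of_rotate_eq_self {l : List α} {m : ℕ} (h : l.rotate m = l) (hm : 0 < m)
    (hml : m < l.length) : Imprim l := by
  rw [rotate_eq_drop_append_take hml.le] at h
  have hcomm : l.take m ++ l.drop m = l.drop m ++ l.take m := by rw [take_append_drop, h]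
  have htake : l.take m ≠ [] := ne_nil_of_length_pos (by simp; omega)
  have hdrop : l.drop m ≠ [] := ne_nil_of_length_pos (by simp; omega)
  simpa using imprim_append_of_append_comm htake hdrop hcomm

theorem eq_or_imprim_of_eq_drop_append_take {x y a b c : List α} {m : ℕ}
    (hlen : x.length = y.length) (hm : 0 < m) (hmx : m < x.length)
    (ha : a = x ∨ a = y) (hb : b = x ∨ b = y) (hc : c = x ∨ c = y)
    (hx : x = a.drop m ++ b.take m) (hy : y = b.drop m ++ c.take m) :
    x = y ∨ ([a, b, c] = [x, y, x] ∨ [a, b, c] = [y, x, y]) ∧ Imprim (x ++ y) := by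
  have hxd : x.drop m ≠ [] := ne_nil_of_length_pos (by simp; omega)
  have hyd : y.drop m ≠ [] := ne_nil_of_length_pos (by simp; omega)
  have hxt : x.take m ≠ [] := ne_nil_of_length_pos (by simp; omega)
  have hyt : y.take m ≠ [] := ne_nil_of_length_pos (by simp; omega)
  rcases ha with ha | ha <;> rcases hb with hb | hb <;> rcases hc with hc | hc <;> subst a b c
  · exact .inl (hx.trans hy.symm)
  · exact .inl (eq_of_prefix_append_self hxd (prefix_append_of_eq_append_take hx)
      (prefix_append_of_eq_append_take hy) hlen)
  · refine .inr ⟨.inl rfl, imprim_of_rotate_eq_self (m := m) ?_ hm (by simp; omega)⟩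
    calc (x ++ y).rotate m = x.drop m ++ (y.take m ++ y.drop m) ++ x.take m := by
          rw [rotate_eq_drop_append_take (by simp; omega), take_append_drop]
          simp [drop_append, take_append, hmx.le]
      _ = x ++ y := by
          rw [append_assoc, append_assoc, ← append_assoc _ (y.take m), ← hx, ← hy]
  · exact .inl (eq_of_suffix_append_self hyt (suffix_append_of_eq_drop_append hx)
      (suffix_append_of_eq_drop_append hy) hlen)
  · exact .inl (eq_of_suffix_append_of_suffix_append hxt (suffix_append_of_eq_drop_append hx)
      (suffix_append_of_eq_drop_append hy) hlen)
  · refine .inr ⟨.inr rfl, imprim_of_rotate_eq_self (m := x.length + m) ?_ (by omega)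
      (by simp; omega)⟩
    calc (x ++ y).rotate (x.length + m)
      _ = y.drop m ++ (x.take m ++ x.drop m) ++ y.take m := by
          rw [rotate_eq_drop_append_take (by simp; omega), take_append_drop]
          simp [drop_append, take_append, drop_eq_nil_of_le, take_of_length_le]
      _ = x ++ y := by
          rw [append_assoc, ← append_assoc, ← append_assoc, ← hx, append_assoc, ← hy]
  · exact .inl (eq_of_prefix_append_of_prefix_append hyd (prefix_append_of_eq_append_take hx)
      (prefix_append_of_eq_append_take hy) hlen)
  · exact .inl (hx.trans hy.symm)

end Imprim

/-- A nontrivial `{x,y}`-interpretation of `x·y` for words of equal length: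
necessarily `v = [x,y,x]` or `v = [y,x,y]`, and `x·y` is imprimitive. -/
theorem uniform_square_interp {α : Type*} (x y p s : List α) (v : List (List α))
    (hlen : x.length = y.length) (hcomm : x ++ y ≠ y ++ x)
    (hv : ∀ a ∈ v, a = x ∨ a = y) (hvne : v ≠ [])
    (heq : p ++ (x ++ y) ++ s = v.flatten)
    (hp : p <+: v.headI ∧ p ≠ v.headI)
    (hs : s <:+ v.getLastD [] ∧ s ≠ v.getLastD [])
    (hnontriv : ¬ (p = [] ∧ s = [])) :
    (v = [x, y, x] ∨ v = [y, x, y]) ∧ Imprim (x ++ y) := by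
  have hxy : x ≠ y := fun h => hcomm (h ▸ rfl)
  have hvlen : ∀ a ∈ v, a.length = x.length := fun a ha => by
    rcases hv a ha with rfl | rfl <;> simp [hlen]
  have hpn : p.length < x.length := hvlen _ (headI_mem hvne) ▸ IsPrefix.length_lt_of_ne hp.1 hp.2
  have hsn : s.length < x.length :=
    hvlen _ (getLastD_mem [] hvne) ▸ IsSuffix.length_lt_of_ne hs.1 hs.2
  have hps : p.length + s.length ≠ 0 := by simpa using hnontriv
  have hk := congrArg length heq
  rw [length_flatten_of_forall_length_eq hvlen] at hk
  simp only [length_append, ← hlen] at hk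
  have h3 := Nat.eq_three_of_mul_eq_add (k := v.length) (by omega) hpn hsn hps
  have hm : 0 < p.length := by rw [h3] at hk; omega
  obtain ⟨a, b, c, rfl⟩ := length_eq_three.mp h3
  obtain ⟨hxw, hyw⟩ := eq_drop_append_take_of_append_eq (by simpa using heq) rfl hlen.symm
    (hvlen a (by simp)) (hvlen b (by simp)) hpn.le
  exact (eq_or_imprim_of_eq_drop_append_take hlen hm hpn (hv a (by simp)) (hv b (by simp))
    (hv c (by simp)) hxw hyw).resolve_left hxy
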